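/- arXiv:1511.08300 — 2 statements merged into one kernel-verified Lean document; each statement's English description precedes it below -/
import Mathlib

section
/- For |x| = 1, x ≠ -1, n ≥ 1 and α ∈ ℂ, the Taylor coefficient A_n(α,x) of ((1+xz)/(1-z))^α satisfies A_n(α,x) = α(1+x)·F(1-n, 1-α; 2; 1+x), where F is the Gaussian hypergeometric function (a terminating hypergeometric sum since 1-n is a nonpositive integer). -/
/-!
Near `z = 0` the function `f z = ((1 + x z) / (1 - z)) ^ α` satisfies the differential equation
`(1 + x z) (1 - z) f' = α (1 + x) f`. Comparing Taylor coefficients gives a three-term recurrence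
which, started from `A 1 = α (1 + x)`, determines `A n` for all `n ≥ 1`. With `w = 1 + x`, the
polynomials `α w F(1 - n, 1 - α; 2; w)` satisfy the same recurrence: it is Gauss' contiguous
relation in the first parameter, and the truncated hypergeometric sums satisfy it exactly.
-/

open Complex Finset

section Recurrence

variable {𝕂 : Type*} [Field 𝕂]

def CoeffRecurrence (p q c : 𝕂) (u : ℕ → 𝕂) : Prop :=
  ∀ m : ℕ, (m + 2) * u (m + 2) + p * (m + 1) * u (m + 1) + q * m * u m = c * u (m + 1)

theorem CoeffRecurrence.eq_of_eq_one [CharZero 𝕂] {p q c : 𝕂} {u v : ℕ → 𝕂}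
    (hu : CoeffRecurrence p q c u) (hv : CoeffRecurrence p q c v) (h1 : u 1 = v 1) (n : ℕ) :
    u (n + 1) = v (n + 1) := by
  have step (m : ℕ) (hm : u (m + 1) = v (m + 1)) (hm' : (m : 𝕂) * u m = m * v m) :
      u (m + 2) = v (m + 2) := by
    have h2 : (m : 𝕂) + 2 ≠ 0 := by exact_mod_cast (m + 1).succ_ne_zero
    refine mul_left_cancel₀ h2 ?_
    linear_combination hu m - hv m + (c - p * (m + 1)) * hm - q * hm'
  induction n using Nat.twoStepInduction with
  | zero => exact h1
  | one => exact step 0 h1 (by simp)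
  | more n ih ih' => exact step (n + 1) ih' (by rw [ih])

end Recurrence

section PowerSeries

open Filter Topology FormalMultilinearSeries

variable {𝕜 : Type*} [NontriviallyNormedField 𝕜] {a b : ℕ → 𝕜} {f : 𝕜 → 𝕜}

theorem hasFPowerSeriesAt_ofScalars_iff :
    HasFPowerSeriesAt f (ofScalars 𝕜 a) 0 ↔
      ∀ᶠ z in 𝓝 0, HasSum (fun n => a n * z ^ n) (f z) := by
  simp [hasFPowerSeriesAt_iff, coeff_ofScalars, mul_comm]

theorem eq_of_eventually_hasSum_pow
    (ha : ∀ᶠ z in 𝓝 0, HasSum (fun n => a n * z ^ n) (f z))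
    (hb : ∀ᶠ z in 𝓝 0, HasSum (fun n => b n * z ^ n) (f z)) : a = b :=
  ofScalars_series_injective 𝕜 𝕜 <|
    (hasFPowerSeriesAt_ofScalars_iff.2 ha).eq_formalMultilinearSeries
      (hasFPowerSeriesAt_ofScalars_iff.2 hb)

theorem eventually_hasSum_deriv [CompleteSpace 𝕜]
    (h : ∀ᶠ z in 𝓝 0, HasSum (fun n => a n * z ^ n) (f z)) :
    ∀ᶠ z in 𝓝 0, HasSum (fun n => (n + 1) * a (n + 1) * z ^ n) (deriv f z) := by
  obtain ⟨r, hr⟩ := hasFPowerSeriesAt_ofScalars_iff.2 h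
  filter_upwards [hasFPowerSeriesAt_iff.1 hr.fderiv.hasFPowerSeriesAt] with z hz
  have := hz.mapL (ContinuousLinearMap.apply 𝕜 𝕜 1)
  simp only [ContinuousLinearMap.apply_apply, ContinuousLinearMap.map_smul, derivSeries_coeff_one,
    coeff_ofScalars, zero_add, fderiv_apply_one_eq_deriv, nsmul_eq_mul, smul_eq_mul] at this
  simpa only [mul_comm, Nat.cast_succ] using this

theorem hasSum_pow_of_hasSum_shift {z S : 𝕜} (hb : b 0 = 0)
    (h : HasSum (fun n => b (n + 1) * z ^ n) S) : HasSum (fun n => b n * z ^ n) (z * S) := by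
  refine (hasSum_nat_add_iff' 1).1 ?_
  simpa only [sum_range_one, hb, zero_mul, sub_zero, pow_succ, mul_assoc, mul_left_comm, mul_comm]
    using h.mul_left z

theorem coeffRecurrence_of_ode [CompleteSpace 𝕜] {p q c : 𝕜}
    (hf : ∀ᶠ z in 𝓝 0, HasSum (fun n => a n * z ^ n) (f z))
    (hode : ∀ᶠ z in 𝓝 0, (1 + p * z + q * z ^ 2) * deriv f z = c * f z) :
    a 1 = c * a 0 ∧ CoeffRecurrence p q c a := by
  -- at `n = 0` the truncated `n - 1` is harmless: the factor `((0 - 1 : ℕ) : 𝕜)` vanishes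
  have hcoeff : (fun n : ℕ => (n + 1) * a (n + 1) + p * (n * a n) + q * ((n - 1 : ℕ) * a (n - 1)))
      = fun n => c * a n := by
    refine eq_of_eventually_hasSum_pow (f := fun z => c * f z) ?_
      (hf.mono fun z hz => by simpa only [mul_assoc] using hz.mul_left c)
    filter_upwards [eventually_hasSum_deriv hf, hode] with z hd hz
    have h1 : HasSum (fun n : ℕ => (n * a n) * z ^ n) (z * deriv f z) :=
      hasSum_pow_of_hasSum_shift (b := fun n : ℕ => n * a n) (by simp) (by simpa using hd)
    have h2 : HasSum (fun n : ℕ => ((n - 1 : ℕ) * a (n - 1)) * z ^ n) (z * (z * deriv f z)) :=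
      hasSum_pow_of_hasSum_shift (b := fun n : ℕ => (n - 1 : ℕ) * a (n - 1)) (by simp)
        (by simpa using h1)
    convert (hd.add (h1.mul_left p)).add (h2.mul_left q) using 1
    · ext n; ring
    · rw [← hz]; ring
  refine ⟨by simpa using congrFun hcoeff 0, fun m => ?_⟩
  have := congrFun hcoeff (m + 1)
  push_cast at this
  linear_combination this

end PowerSeries

open Filter Topology in
theorem eventually_ode_div_cpow (x α : ℂ) :
    ∀ᶠ z in 𝓝 0, (1 + (x - 1) * z + -x * z ^ 2) * deriv (fun z => ((1 + x * z) / (1 - z)) ^ α) z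
      = α * (1 + x) * ((1 + x * z) / (1 - z)) ^ α := by
  have hcont : ContinuousAt (fun z : ℂ => (1 + x * z) / (1 - z)) 0 :=
    ContinuousAt.div (by fun_prop) (by fun_prop) (by norm_num)
  have hslit : ∀ᶠ z in 𝓝 0, (1 + x * z) / (1 - z) ∈ slitPlane :=
    hcont.eventually_mem (isOpen_slitPlane.mem_nhds (by simp))
  have hne : ∀ᶠ z : ℂ in 𝓝 0, 1 - z ≠ 0 :=
    (continuous_const.sub continuous_id).continuousAt.eventually_ne (by norm_num)
  filter_upwards [hslit, hne] with z hv hz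
  have hd : HasDerivAt (fun z => (1 + x * z) / (1 - z)) ((1 + x) / (1 - z) ^ 2) z :=
    ((((hasDerivAt_id' z).const_mul x).const_add 1).div
      ((hasDerivAt_id' z).const_sub 1) hz).congr_deriv (by ring)
  have hv0 : (1 + x * z) / (1 - z) ≠ 0 := slitPlane_ne_zero hv
  have hnum : 1 + x * z ≠ 0 := by rintro h; simp [h] at hv0
  rw [(hd.cpow_const hv).deriv, cpow_sub _ _ hv0, cpow_one]
  field_simp
  ring

section Pochhammer

open Polynomial

variable {R : Type*} [CommSemiring R]

theorem ascPochhammer_succ_eval_left (k : ℕ) (a : R) :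
    (ascPochhammer R (k + 1)).eval a = a * (ascPochhammer R k).eval (a + 1) := by
  simp [ascPochhammer_succ_left, eval_comp]

theorem ascPochhammer_eval_eq_prod_range (k : ℕ) (a : R) :
    (ascPochhammer R k).eval a = ∏ i ∈ range k, (a + i) := by
  induction k with
  | zero => simp
  | succ k ih => rw [ascPochhammer_succ_eval, ih, prod_range_succ]

end Pochhammer

section Hypergeometric

open Polynomial

variable {𝕂 : Type*} [Field 𝕂] (a b c : 𝕂)

local notation "T" => ordinaryHypergeometricCoefficient (𝕂 := 𝕂)

theorem ordinaryHypergeometricCoefficient_zero : T a b c 0 = 1 := by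
  simp [ordinaryHypergeometricCoefficient]

theorem ordinaryHypergeometricCoefficient_succ (k : ℕ) :
    T a b c (k + 1) = T a b c k * ((a + k) * (b + k) / ((c + k) * (k + 1))) := by
  simp only [ordinaryHypergeometricCoefficient, ascPochhammer_succ_eval, Nat.factorial_succ,
    Nat.cast_mul, Nat.cast_succ, div_eq_mul_inv, mul_inv]
  ring

theorem ordinaryHypergeometricCoefficient_sub_one_succ (k : ℕ) :
    T (a - 1) b c (k + 1) = T a b c k * ((a - 1) * (b + k) / ((c + k) * (k + 1))) := by
  simp only [ordinaryHypergeometricCoefficient, ascPochhammer_succ_eval,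
    ascPochhammer_succ_eval_left k (a - 1), sub_add_cancel, Nat.factorial_succ, Nat.cast_mul,
    Nat.cast_succ, div_eq_mul_inv, mul_inv]
  ring

theorem mul_ordinaryHypergeometricCoefficient_add_one (k : ℕ) :
    a * T (a + 1) b c k = T a b c k * (a + k) := by
  have h := (ascPochhammer_succ_eval_left k a).symm.trans (ascPochhammer_succ_eval k a)
  simp only [ordinaryHypergeometricCoefficient]
  linear_combination
    ((k.factorial : 𝕂)⁻¹ * (ascPochhammer 𝕂 k).eval b * ((ascPochhammer 𝕂 k).eval c)⁻¹) * h

/-- The coefficient of `w ^ (k + 1)` in Gauss' contiguous relation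
`(c - a) F(a - 1) + (2a - c + (b - a) w) F(a) + a (w - 1) F(a + 1) = 0`. -/
theorem ordinaryHypergeometricCoefficient_contiguous [CharZero 𝕂] {k : ℕ} (hc : c + k ≠ 0) :
    (c - a) * T (a - 1) b c (k + 1) + (2 * a - c) * T a b c (k + 1) - a * T (a + 1) b c (k + 1)
      + ((b - a) * T a b c k + a * T (a + 1) b c k) = 0 := by
  have hk : (k : 𝕂) + 1 ≠ 0 := by exact_mod_cast k.succ_ne_zero
  have h := mul_ordinaryHypergeometricCoefficient_add_one a b c k
  rw [ordinaryHypergeometricCoefficient_sub_one_succ, ordinaryHypergeometricCoefficient_succ,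
    ordinaryHypergeometricCoefficient_succ (a + 1) b c]
  generalize T a b c k = t, T (a + 1) b c k = u at h ⊢
  field_simp
  linear_combination ((c + k) * (k + 1) - (a + 1 + k) * (b + k)) * h

noncomputable def hypergeomPartialSum (N : ℕ) (w : 𝕂) : 𝕂 :=
  ∑ k ∈ range N, T a b c k * w ^ k

local notation "S" => hypergeomPartialSum (𝕂 := 𝕂)

theorem hypergeomPartialSum_contiguous [CharZero 𝕂] (w : 𝕂) (hc : ∀ j : ℕ, c + j ≠ 0) (N : ℕ) :
    (c - a) * S (a - 1) b c (N + 1) w + (2 * a - c) * S a b c (N + 1) w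
      - a * S (a + 1) b c (N + 1) w + w * ((b - a) * S a b c N w + a * S (a + 1) b c N w) = 0 := by
  induction N with
  | zero =>
    simp only [hypergeomPartialSum, zero_add, sum_range_one, range_zero, sum_empty,
      ordinaryHypergeometricCoefficient_zero, one_mul, mul_zero]
    ring
  | succ N ih =>
    have h := ordinaryHypergeometricCoefficient_contiguous a b c (hc N)
    simp only [hypergeomPartialSum, sum_range_succ _ (N + 1)] at ih ⊢
    simp only [sum_range_succ _ N] at ih ⊢
    linear_combination ih + w ^ (N + 1) * h

theorem hypergeomPartialSum_neg_nat_of_le {m N : ℕ} (w : 𝕂) (h : m + 1 ≤ N) :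
    S (-m) b c N w = S (-m) b c (m + 1) w := by
  refine (sum_subset (range_subset_range.2 h) fun k _ hkm => ?_).symm
  simp only [mem_range, not_lt] at hkm
  simp [ascPochhammer_eval_neg_coe_nat_of_lt (show m < k by omega)]

theorem hypergeomPartialSum_one_sub_nat_recurrence [CharZero 𝕂] (w : 𝕂)
    (hc : ∀ j : ℕ, c + j ≠ 0) (n : ℕ) :
    (c + n) * S (1 - (n + 2 : ℕ)) b c (n + 2) w
      + ((b + n) * w - 2 * n - c) * S (1 - (n + 1 : ℕ)) b c (n + 1) w
      - n * (w - 1) * S (1 - n) b c n w = 0 := by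
  have h := hypergeomPartialSum_contiguous (-(n : 𝕂)) b c w hc (n + 1)
  have e2 : (1 - (n + 2 : ℕ) : 𝕂) = -n - 1 := by push_cast; ring
  have e1 : (1 - (n + 1 : ℕ) : 𝕂) = -n := by push_cast; ring
  have h1 : S (-n) b c (n + 1 + 1) w = S (-n) b c (n + 1) w :=
    hypergeomPartialSum_neg_nat_of_le b c w (by omega)
  have h0 (N : ℕ) (hN : n ≤ N) : (n : 𝕂) * S (-n + 1) b c N w = n * S (1 - n) b c n w := by
    rcases n with _ | m
    · simp
    · have e : (-((m + 1 : ℕ) : 𝕂) + 1) = -m := by push_cast; ring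
      have e' : (1 - ((m + 1 : ℕ) : 𝕂)) = -m := by push_cast; ring
      rw [e, e', hypergeomPartialSum_neg_nat_of_le b c w hN,
        hypergeomPartialSum_neg_nat_of_le b c w le_rfl]
  rw [e2, e1]
  linear_combination h + (2 * n + c) * h1 + w * h0 (n + 1) (by omega) - h0 (n + 1 + 1) (by omega)

end Hypergeometric

theorem coeffRecurrence_hypergeomPartialSum (x α : ℂ) :
    CoeffRecurrence (x - 1) (-x) (α * (1 + x))
      (fun n : ℕ => α * (1 + x) * hypergeomPartialSum (1 - n : ℂ) (1 - α) 2 n (1 + x)) := by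
  intro m
  have h := hypergeomPartialSum_one_sub_nat_recurrence (1 - α) 2 (1 + x)
    (fun j => by norm_cast; omega) m
  push_cast at h ⊢
  linear_combination α * (1 + x) * h

theorem coeff_A_hypergeometric_general (x α : ℂ)
    (A : ℕ → ℂ) (hA0 : A 0 = 1)
    (hA : ∀ z : ℂ, ‖z‖ < 1 →
      HasSum (fun n : ℕ => A n * z ^ n) (((1 + x * z) / (1 - z)) ^ α))
    (n : ℕ) (hn : 1 ≤ n) :
    A n = α * (1 + x) *
      ∑ k ∈ Finset.range n,
        ((∏ i ∈ Finset.range k, ((1 - n : ℂ) + i)) * (∏ i ∈ Finset.range k, ((1 - α) + i)) /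
          ((∏ i ∈ Finset.range k, ((2:ℂ) + i)) * (Nat.factorial k : ℂ))) * (1 + x) ^ k := by
  have hsum : ∀ᶠ z in nhds 0, HasSum (fun n => A n * z ^ n) (((1 + x * z) / (1 - z)) ^ α) := by
    filter_upwards [Metric.ball_mem_nhds (0 : ℂ) one_pos] with z hz
    exact hA z (by simpa using hz)
  obtain ⟨hA1, hrec⟩ := coeffRecurrence_of_ode hsum (eventually_ode_div_cpow x α)
  obtain ⟨m, rfl⟩ : ∃ m, n = m + 1 := ⟨n - 1, by omega⟩
  rw [hrec.eq_of_eq_one (coeffRecurrence_hypergeomPartialSum x α)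
    (by simp [hA1, hA0, hypergeomPartialSum, ordinaryHypergeometricCoefficient_zero]) m]
  simp only [hypergeomPartialSum, ← ascPochhammer_eval_eq_prod_range]
  congr 1
  refine sum_congr rfl fun k _ => ?_
  ring

theorem coeff_A_hypergeometric (x α : ℂ) (hx : ‖x‖ = 1) (hx1 : x ≠ -1)
    (A : ℕ → ℂ) (hA0 : A 0 = 1)
    (hA : ∀ z : ℂ, ‖z‖ < 1 →
      HasSum (fun n : ℕ => A n * z ^ n) (((1 + x * z) / (1 - z)) ^ α))
    (n : ℕ) (hn : 1 ≤ n) :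
    A n = α * (1 + x) *
      ∑ k ∈ Finset.range n,
        ((∏ i ∈ Finset.range k, ((1 - n : ℂ) + i)) * (∏ i ∈ Finset.range k, ((1 - α) + i)) /
          ((∏ i ∈ Finset.range k, ((2:ℂ) + i)) * (Nat.factorial k : ℂ))) * (1 + x) ^ k :=
  coeff_A_hypergeometric_general x α A hA0 hA n hn
end

section
/- Let D(x) = 1/((1+x)(1 − (−x̄)^α)) for x = e^{iγ}, 0 < γ < π, α ∈ (1,2], with (−x̄)^α = e^{iα(π−γ)} ≠ 1. Then Re D(x) = 1/4 + tan(γ/2)/(4 tan(α(π−γ)/2)), provided tan(α(π−γ)/2) is defined and nonzero. -/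
open Complex Real

/-! Factoring out half angles, `1 + e^{iγ} = 2 cos(γ/2) e^{iγ/2}` and
`1 - e^{iβ} = -2i sin(β/2) e^{iβ/2}`, so `D = i e^{-i(γ+β)/2} / (4 cos(γ/2) sin(β/2))` with
`β = α(π - γ)`. Its real part is `sin(γ/2 + β/2) / (4 cos(γ/2) sin(β/2))`, and the sine addition
formula splits this into `1/4 + tan(γ/2) / (4 tan(β/2))`. -/

lemma exp_mul_I_eq_exp_half_mul_I_sq (θ : ℝ) : exp (θ * I) = exp (θ / 2 * I) ^ 2 := by
  rw [← Complex.exp_nat_mul]; ring_nf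

lemma exp_neg_half_mul_I (θ : ℝ) : exp (-(θ / 2 : ℂ) * I) = (exp (θ / 2 * I))⁻¹ := by
  rw [← Complex.exp_neg]; ring_nf

lemma one_add_exp_mul_I (θ : ℝ) :
    1 + exp (θ * I) = 2 * Real.cos (θ / 2) * exp (θ / 2 * I) := by
  rw [ofReal_cos, Complex.cos, ofReal_div, ofReal_ofNat, exp_neg_half_mul_I,
    exp_mul_I_eq_exp_half_mul_I_sq]
  field_simp
  ring

lemma one_sub_exp_mul_I (θ : ℝ) :
    1 - exp (θ * I) = -2 * I * Real.sin (θ / 2) * exp (θ / 2 * I) := by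
  rw [ofReal_sin, Complex.sin, ofReal_div, ofReal_ofNat, exp_neg_half_mul_I,
    exp_mul_I_eq_exp_half_mul_I_sq]
  field_simp
  ring_nf
  rw [I_sq]; ring

lemma re_I_mul_exp_neg_mul_I (θ : ℝ) : (I * exp (-(θ * I))).re = Real.sin θ := by
  rw [← neg_mul, ← ofReal_neg, exp_mul_I]
  simp [← ofReal_cos, ← ofReal_sin]

lemma one_div_one_add_exp_mul_one_sub_exp {γ β : ℝ} (hγ : Real.cos (γ / 2) ≠ 0)
    (hβ : Real.sin (β / 2) ≠ 0) :
    1 / ((1 + exp (γ * I)) * (1 - exp (β * I))) =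
      I * exp (-((γ / 2 + β / 2 : ℝ) * I)) / (4 * Real.cos (γ / 2) * Real.sin (β / 2) : ℝ) := by
  rw [one_add_exp_mul_I, one_sub_exp_mul_I, ofReal_add, add_mul, neg_add, Complex.exp_add,
    Complex.exp_neg, Complex.exp_neg]
  have hγ' : (Real.cos (γ / 2) : ℂ) ≠ 0 := ofReal_ne_zero.mpr hγ
  have hβ' : (Real.sin (β / 2) : ℂ) ≠ 0 := ofReal_ne_zero.mpr hβ
  push_cast
  field_simp
  ring_nf
  rw [I_sq]; ring

lemma re_one_div_one_add_exp_mul_one_sub_exp {γ β : ℝ} (hγ : Real.cos (γ / 2) ≠ 0)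
    (hβ : Real.sin (β / 2) ≠ 0) :
    (1 / ((1 + exp (γ * I)) * (1 - exp (β * I)))).re =
      Real.sin (γ / 2 + β / 2) / (4 * Real.cos (γ / 2) * Real.sin (β / 2)) := by
  rw [one_div_one_add_exp_mul_one_sub_exp hγ hβ, div_ofReal_re, re_I_mul_exp_neg_mul_I]

lemma sin_add_div_cos_mul_sin {a b : ℝ} (ha : Real.cos a ≠ 0) (hb : Real.tan b ≠ 0) :
    Real.sin (a + b) / (4 * Real.cos a * Real.sin b) = 1 / 4 + Real.tan a / (4 * Real.tan b) := by
  rw [Real.tan_eq_sin_div_cos] at hb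
  obtain ⟨hsb, hcb⟩ := div_ne_zero_iff.mp hb
  rw [Real.sin_add, Real.tan_eq_sin_div_cos, Real.tan_eq_sin_div_cos]
  field_simp
  ring

theorem re_D_formula_general (γ α : ℝ) (hγ0 : 0 < γ) (hγπ : γ < π)
    (htan : Real.tan (α * (π - γ) / 2) ≠ 0) :
    (1 / ((1 + Complex.exp (γ * Complex.I)) *
        (1 - Complex.exp ((α * (π - γ)) * Complex.I)))).re =
      1 / 4 + Real.tan (γ / 2) / (4 * Real.tan (α * (π - γ) / 2)) := by
  have hcos : Real.cos (γ / 2) ≠ 0 :=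
    (Real.cos_pos_of_mem_Ioo ⟨by linarith [Real.pi_pos], by linarith⟩).ne'
  have hsin : Real.sin (α * (π - γ) / 2) ≠ 0 := by
    rw [Real.tan_eq_sin_div_cos] at htan
    exact (div_ne_zero_iff.mp htan).1
  have hcast : (α * (π - γ) : ℂ) = ((α * (π - γ) : ℝ) : ℂ) := by push_cast; rfl
  rw [hcast, re_one_div_one_add_exp_mul_one_sub_exp hcos hsin, sin_add_div_cos_mul_sin hcos htan]

theorem re_D_formula (γ α : ℝ) (hγ0 : 0 < γ) (hγπ : γ < π)
    (hα1 : 1 < α) (hα2 : α ≤ 2)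
    (hw : Complex.exp ((α * (π - γ)) * Complex.I) ≠ 1)
    (hcos : Real.cos (α * (π - γ) / 2) ≠ 0)
    (htan : Real.tan (α * (π - γ) / 2) ≠ 0) :
    (1 / ((1 + Complex.exp (γ * Complex.I)) *
        (1 - Complex.exp ((α * (π - γ)) * Complex.I)))).re =
      1 / 4 + Real.tan (γ / 2) / (4 * Real.tan (α * (π - γ) / 2)) :=
  re_D_formula_general γ α hγ0 hγπ htan
end
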